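/- The Earley algorithm is correct: the string w = a_1⋯a_n is in the language of G if and only if [S → α •] ∈ E_{0,n} for some production S → α ∈ P. -/

import Mathlib

/-! Formalization of Earley parsing and the Nederhof–Satta variant. -/

variable {T N : Type}

/-- A context-free grammar: a start nonterminal and a set of productions. -/
structure CFG (T N : Type) where
  initial : N
  rules : Set (N × List (Symbol T N))

/-- One rewriting step of the grammar. -/
def CFG.Produces (g : CFG T N) (u v : List (Symbol T N)) : Prop :=
  ∃ A α p q, (A, α) ∈ g.rules ∧ u = p ++ [Symbol.nonterminal A] ++ q ∧ v = p ++ α ++ q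

/-- The derivation relation ⇒* (reflexive-transitive closure of rewriting). -/
def CFG.Derives (g : CFG T N) : List (Symbol T N) → List (Symbol T N) → Prop :=
  Relation.ReflTransGen g.Produces

/-- The language of the grammar: { w | S ⇒* w }. -/
def CFG.language (g : CFG T N) : Set (List T) :=
  { w | g.Derives [Symbol.nonterminal g.initial] (w.map Symbol.terminal) }

/-- `inputSlice w i j` is the substring a_{i+1}⋯a_j of `w` (0-based: w[i..j)), as symbols. -/
def inputSlice (w : List T) (i j : ℕ) : List (Symbol T N) :=
  ((w.take j).drop i).map Symbol.terminal

/-- The least Earley table: `Earley g w A α β i j` means the dotted item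
[A → α • β] is inserted in E_{i,j}. -/
inductive Earley (g : CFG T N) (w : List T) :
    N → List (Symbol T N) → List (Symbol T N) → ℕ → ℕ → Prop where
  | init {α} : (g.initial, α) ∈ g.rules → Earley g w g.initial [] α 0 0
  | predict {B α A β i j γ} : Earley g w B α (Symbol.nonterminal A :: β) i j →
      (A, γ) ∈ g.rules → Earley g w A [] γ j j
  | scan {A α a β i j} : Earley g w A α (Symbol.terminal a :: β) i j →
      w[j]? = some a → Earley g w A (α ++ [Symbol.terminal a]) β i (j + 1)
  | complete {A α B β i k γ j} : Earley g w A α (Symbol.nonterminal B :: β) i k →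
      Earley g w B γ [] k j → (B, γ) ∈ g.rules →
      Earley g w A (α ++ [Symbol.nonterminal B]) β i j

mutual
  /-- Forward part of the variant: `VarU g w β j` means suffix item [β] ∈ U_j. -/
  inductive VarU (g : CFG T N) (w : List T) : List (Symbol T N) → ℕ → Prop where
    | init {α} : (g.initial, α) ∈ g.rules → VarU g w α 0
    | predict {A β j γ} : VarU g w (Symbol.nonterminal A :: β) j →
        (A, γ) ∈ g.rules → VarU g w γ j
    | scan {a β j} : VarU g w (Symbol.terminal a :: β) j → w[j]? = some a →
        VarU g w β (j + 1)
    | complete {B β k γ j} : VarU g w (Symbol.nonterminal B :: β) k → (B, γ) ∈ g.rules →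
        VarT g w γ k j → VarU g w β j

  /-- Backward part of the variant: `VarT g w β j m` means suffix item [β] ∈ T_{j,m}. -/
  inductive VarT (g : CFG T N) (w : List T) : List (Symbol T N) → ℕ → ℕ → Prop where
    | empty {m} : VarU g w [] m → VarT g w [] m m
    | scan {a β j m} : VarU g w (Symbol.terminal a :: β) j → w[j]? = some a →
        VarT g w β (j + 1) m → VarT g w (Symbol.terminal a :: β) j m
    | complete {B β k γ j m} : VarU g w (Symbol.nonterminal B :: β) k → (B, γ) ∈ g.rules →
        VarT g w γ k j → VarT g w β j m → VarT g w (Symbol.nonterminal B :: β) k m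
end

/-! A sentential form derives a terminal string exactly when it has a parse forest with that
frontier, and parse forests are amenable to structural induction. An item [A → α • β] ∈ E_{i,j}
certifies a parse forest of a_{i+1}⋯a_j from α; conversely, if β has a parse forest for the
input following position j, predicting, scanning and completing along it advance the dot to the
end of β. -/

theorem List.drop_eq_cons_iff {α : Type*} {l r : List α} {j : ℕ} {a : α} :
    l.drop j = a :: r ↔ l[j]? = some a ∧ l.drop (j + 1) = r := by
  rw [← List.head?_drop, ← List.tail_drop]
  cases l.drop j <;> simp

namespace CFG

variable {g : CFG T N}

theorem Produces.append_left {u v : List (Symbol T N)} (h : g.Produces u v)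
    (p : List (Symbol T N)) : g.Produces (p ++ u) (p ++ v) := by
  obtain ⟨A, α, p', q, hr, rfl, rfl⟩ := h
  exact ⟨A, α, p ++ p', q, hr, by simp, by simp⟩

theorem Produces.append_right {u v : List (Symbol T N)} (h : g.Produces u v)
    (q : List (Symbol T N)) : g.Produces (u ++ q) (v ++ q) := by
  obtain ⟨A, α, p, q', hr, rfl, rfl⟩ := h
  exact ⟨A, α, p, q' ++ q, hr, by simp, by simp⟩

theorem Derives.append_left {u v : List (Symbol T N)} (h : g.Derives u v)
    (p : List (Symbol T N)) : g.Derives (p ++ u) (p ++ v) :=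
  h.lift (p ++ ·) fun _ _ huv => huv.append_left p

theorem Derives.append_right {u v : List (Symbol T N)} (h : g.Derives u v)
    (q : List (Symbol T N)) : g.Derives (u ++ q) (v ++ q) :=
  h.lift (· ++ q) fun _ _ huv => huv.append_right q

theorem produces_nonterminal_cons {A : N} {γ : List (Symbol T N)} (hr : (A, γ) ∈ g.rules)
    (β : List (Symbol T N)) : g.Produces (Symbol.nonterminal A :: β) (γ ++ β) :=
  ⟨A, γ, [], β, hr, rfl, rfl⟩

/-- `g.Yields u x`: the sentential form `u` has a forest of parse trees with frontier `x`. -/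
inductive Yields (g : CFG T N) : List (Symbol T N) → List T → Prop where
  | nil : Yields g [] []
  | terminal {a β x} : Yields g β x → Yields g (Symbol.terminal a :: β) (a :: x)
  | nonterminal {A γ β x y} : (A, γ) ∈ g.rules → Yields g γ x → Yields g β y →
      Yields g (Symbol.nonterminal A :: β) (x ++ y)

theorem yields_map_terminal (x : List T) : g.Yields (x.map Symbol.terminal) x := by
  induction x with
  | nil => exact .nil
  | cons a x ih => exact ih.terminal

theorem Yields.append {α β : List (Symbol T N)} {x y : List T} (hα : g.Yields α x)
    (hβ : g.Yields β y) : g.Yields (α ++ β) (x ++ y) := by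
  induction hα with
  | nil => exact hβ
  | terminal _ ih => exact ih.terminal
  | nonterminal hr hγ _ _ ih => simpa using Yields.nonterminal hr hγ ih

theorem Yields.exists_split {α β : List (Symbol T N)} {z : List T}
    (h : g.Yields (α ++ β) z) : ∃ x y, z = x ++ y ∧ g.Yields α x ∧ g.Yields β y := by
  induction α generalizing z with
  | nil => exact ⟨[], z, rfl, .nil, h⟩
  | cons s α ih =>
    cases h with
    | terminal h =>
      obtain ⟨x, y, rfl, hx, hy⟩ := ih h
      exact ⟨_ :: x, y, rfl, hx.terminal, hy⟩
    | nonterminal hr hγ h =>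
      obtain ⟨x, y, rfl, hx, hy⟩ := ih h
      exact ⟨_ ++ x, y, (List.append_assoc ..).symm, .nonterminal hr hγ hx, hy⟩

theorem yields_nonterminal_iff {A : N} {x : List T} :
    g.Yields [Symbol.nonterminal A] x ↔ ∃ γ, (A, γ) ∈ g.rules ∧ g.Yields γ x := by
  constructor
  · intro h
    cases h with | nonterminal hr hγ hnil =>
    cases hnil
    exact ⟨_, hr, by simpa using hγ⟩
  · rintro ⟨γ, hr, hγ⟩
    simpa using Yields.nonterminal hr hγ .nil

theorem Yields.of_produces {u v : List (Symbol T N)} {x : List T} (huv : g.Produces u v)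
    (hv : g.Yields v x) : g.Yields u x := by
  obtain ⟨A, α, p, q, hr, rfl, rfl⟩ := huv
  obtain ⟨xpα, xq, rfl, hpα, hq⟩ := hv.exists_split
  obtain ⟨xp, xα, rfl, hp, hα⟩ := hpα.exists_split
  exact (hp.append (yields_nonterminal_iff.2 ⟨α, hr, hα⟩)).append hq

theorem Yields.derives {u : List (Symbol T N)} {x : List T} (h : g.Yields u x) :
    g.Derives u (x.map Symbol.terminal) := by
  induction h with
  | nil => exact .refl
  | @terminal a _ _ _ ih => exact ih.append_left [Symbol.terminal a]
  | @nonterminal _ _ β x _ hr _ _ ihγ ihβ =>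
    rw [List.map_append]
    exact .head (produces_nonterminal_cons hr β)
      ((ihγ.append_right β).trans (ihβ.append_left (x.map Symbol.terminal)))

theorem derives_map_terminal_iff {u : List (Symbol T N)} {x : List T} :
    g.Derives u (x.map Symbol.terminal) ↔ g.Yields u x := by
  refine ⟨fun h => ?_, Yields.derives⟩
  induction h using Relation.ReflTransGen.head_induction_on with
  | refl => exact yields_map_terminal x
  | head huv _ ih => exact ih.of_produces huv

theorem mem_language_iff {w : List T} :
    w ∈ g.language ↔ ∃ α, (g.initial, α) ∈ g.rules ∧ g.Yields α w :=
  derives_map_terminal_iff.trans yields_nonterminal_iff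

end CFG

namespace Earley

variable {g : CFG T N} {w : List T}

theorem exists_yields {A : N} {α β : List (Symbol T N)} {i j : ℕ}
    (h : Earley g w A α β i j) : ∃ x, g.Yields α x ∧ w.drop i = x ++ w.drop j := by
  induction h with
  | init _ | predict _ _ _ => exact ⟨[], .nil, rfl⟩
  | @scan _ _ a _ _ _ _ ha ih =>
    obtain ⟨x, hx, hi⟩ := ih
    refine ⟨x ++ [a], hx.append (CFG.yields_map_terminal [a]), ?_⟩
    rw [hi, List.drop_eq_cons_iff.2 ⟨ha, rfl⟩]
    simp
  | complete _ _ hr ih₁ ih₂ =>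
    obtain ⟨x, hx, hi⟩ := ih₁
    obtain ⟨y, hy, hk⟩ := ih₂
    exact ⟨x ++ y, hx.append (CFG.yields_nonterminal_iff.2 ⟨_, hr, hy⟩), by simp [hi, hk]⟩

theorem completed_of_yields {A : N} {α β : List (Symbol T N)} {i j : ℕ} {x v : List T}
    (h : Earley g w A α β i j) (hβ : g.Yields β x) (hw : w.drop j = x ++ v) :
    Earley g w A (α ++ β) [] i (j + x.length) := by
  induction hβ generalizing A α i j v with
  | nil => simpa using h
  | terminal _ ih =>
    obtain ⟨ha, hw'⟩ := List.drop_eq_cons_iff.1 hw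
    simpa [Nat.add_comm, Nat.add_left_comm] using ih (h.scan ha) hw'
  | @nonterminal _ _ _ x y hr _ _ ihγ ihβ =>
    have hγ := ihγ (h.predict hr) (v := y ++ v) (by simpa using hw)
    have hw' : w.drop (j + x.length) = y ++ v := by
      rw [← List.drop_drop, hw, List.append_assoc, List.drop_left]
    simpa [Nat.add_assoc] using ihβ (h.complete (by simpa using hγ) hr) hw'

end Earley

/-- Earley is correct: w ∈ L(G) iff [S → α •] ∈ E_{0,n} for some S → α ∈ P. -/
theorem earley_correct (g : CFG T N) (w : List T) :
    w ∈ g.language ↔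
      ∃ α, (g.initial, α) ∈ g.rules ∧ Earley g w g.initial α [] 0 w.length := by
  rw [CFG.mem_language_iff]
  constructor
  · rintro ⟨α, hr, hα⟩
    exact ⟨α, hr, by simpa using (Earley.init hr).completed_of_yields hα (v := []) (by simp)⟩
  · rintro ⟨α, hr, hE⟩
    obtain ⟨x, hx, hw⟩ := hE.exists_yields
    rw [List.drop_zero, List.drop_length, List.append_nil] at hw
    exact ⟨α, hr, hw ▸ hx⟩
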